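/- In the setting of the correlated right-truncated Gaussian model with circulant correlation R and ρ = row sum of R^{-1/2}, the maximum X_(n) with CDF F_η(x) = [Φ(ρx)/Φ(ρη)]^n (x < η) satisfies, with a_n = (η - Φ_{ρη}^{-1}(1-1/n)/ρ) appropriately scaled (a_n = (ρη - Φ_{ρη}^{-1}(1-1/n))/ρ) and centering at η: lim_{n→∞} F_η(a_n x + η) = exp(x) for x ≤ 0, the reverse Weibull distribution with shape 1. -/

import Mathlib

open MeasureTheory ProbabilityTheory Filter Real

noncomputable def Phi (x : ℝ) : ℝ := ((gaussianReal 0 1) (Set.Iic x)).toReal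

noncomputable def stdphi (x : ℝ) : ℝ := gaussianPDFReal 0 1 x

noncomputable def PhiInv (p : ℝ) : ℝ := Function.invFun Phi p

noncomputable def truncQuantile (η p : ℝ) : ℝ := PhiInv (p * Phi η)

/-! With `c = ρη` and `q n = Φ_c⁻¹(1 - 1/n)`, the argument of `Φ` is `c + (c - q n) x` and
`Φ c - Φ (q n) = Φ c / n`. As `Φ' c = φ c ≠ 0`, this forces `n (c - q n) → Φ c / φ c`, hence
`n (Φ (c + (c - q n) x) / Φ c - 1) → x`, and `(1 + x_n / n) ^ n → exp x` whenever `x_n → x`. -/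

open Topology

theorem tendsto_div_pow_exp_of_differentiableAt {F : ℝ → ℝ} {c : ℝ}
    (hF : DifferentiableAt ℝ F c) (hF' : deriv F c ≠ 0) (hFc : F c ≠ 0)
    {q : ℕ → ℝ} (hq : Tendsto q atTop (𝓝 c))
    (hFq : ∀ᶠ n : ℕ in atTop, F (q n) = (1 - 1 / n) * F c) (x : ℝ) :
    Tendsto (fun n : ℕ => (F ((c - q n) * x + c) / F c) ^ n) atTop (𝓝 (exp x)) := by
  have hs : ContinuousAt (dslope F c) c := continuousAt_dslope_same.2 hF
  rw [ContinuousAt, dslope_same] at hs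
  have hy : Tendsto (fun n => (c - q n) * x + c) atTop (𝓝 c) := by
    simpa using (((tendsto_const_nhds (x := c)).sub hq).mul_const x).add_const c
  have hscale : Tendsto (fun n : ℕ => n * (c - q n)) atTop (𝓝 (F c / deriv F c)) := by
    have hlim : Tendsto (fun n => F c / dslope F c (q n)) atTop (𝓝 (F c / deriv F c)) :=
      tendsto_const_nhds.div (hs.comp hq) hF'
    refine hlim.congr' ?_
    filter_upwards [hFq, eventually_ne_atTop 0] with n hn hn0
    have h := sub_smul_dslope F c (q n)
    rw [hn, smul_eq_mul] at h
    field_simp at h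
    have hmul : dslope F c (q n) * (n * (c - q n)) = F c := by linear_combination -h
    rw [div_eq_iff (left_ne_zero_of_mul (hmul ▸ hFc)), ← hmul, mul_comm]
  refine (tendsto_one_add_pow_exp_of_tendsto (g := fun n => F ((c - q n) * x + c) / F c - 1)
    ?_).congr fun n => by rw [add_sub_cancel]
  have hlim := ((hscale.mul_const x).mul (hs.comp hy)).div_const (F c)
  rw [show F c / deriv F c * x * deriv F c / F c = x by field_simp] at hlim
  refine hlim.congr fun n => ?_
  have h := sub_smul_dslope F c ((c - q n) * x + c)
  simp only [add_sub_cancel_right, smul_eq_mul] at h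
  simp only [Function.comp_apply]
  rw [div_sub_one hFc, ← h]
  ring

lemma Phi_eq_cdf : Phi = cdf (gaussianReal 0 1) := by
  funext y
  rw [cdf_eq_real]
  rfl

lemma stdphi_pos (x : ℝ) : 0 < stdphi x := gaussianPDFReal_pos 0 1 x one_ne_zero

lemma integrable_stdphi : Integrable stdphi := integrable_gaussianPDFReal 0 1

lemma continuous_stdphi : Continuous stdphi := by
  unfold stdphi
  rw [gaussianPDFReal_def]
  fun_prop

lemma Phi_sub_Phi (a b : ℝ) : Phi b - Phi a = ∫ t in a..b, stdphi t := by
  have h (y : ℝ) : Phi y = ∫ t in Set.Iic y, stdphi t := by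
    rw [Phi, gaussianReal_apply_eq_integral 0 one_ne_zero]
    exact ENNReal.toReal_ofReal (setIntegral_nonneg measurableSet_Iic fun t _ => (stdphi_pos t).le)
  rw [h, h]
  exact intervalIntegral.integral_Iic_sub_Iic integrable_stdphi.integrableOn
    integrable_stdphi.integrableOn

lemma strictMono_Phi : StrictMono Phi := fun a b hab => by
  have h := intervalIntegral.intervalIntegral_pos_of_pos integrable_stdphi.intervalIntegrable
    stdphi_pos hab
  linarith [Phi_sub_Phi a b]

lemma hasDerivAt_Phi (c : ℝ) : HasDerivAt Phi (stdphi c) c := by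
  have h : Phi = fun u => Phi 0 + ∫ t in (0 : ℝ)..u, stdphi t := by
    funext u
    rw [← Phi_sub_Phi, add_sub_cancel]
  rw [h]
  exact (intervalIntegral.integral_hasDerivAt_right integrable_stdphi.intervalIntegrable
    (continuous_stdphi.stronglyMeasurableAtFilter _ _) continuous_stdphi.continuousAt).const_add _

lemma continuous_Phi : Continuous Phi :=
  continuous_iff_continuousAt.2 fun c => (hasDerivAt_Phi c).continuousAt

lemma Phi_pos (x : ℝ) : 0 < Phi x :=
  (Phi_eq_cdf ▸ cdf_nonneg _ (x - 1)).trans_lt (strictMono_Phi (sub_one_lt x))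

lemma Phi_lt_one (x : ℝ) : Phi x < 1 :=
  (strictMono_Phi (lt_add_one x)).trans_le (Phi_eq_cdf ▸ cdf_le_one _ (x + 1))

lemma Phi_PhiInv {p : ℝ} (h0 : 0 < p) (h1 : p < 1) : Phi (PhiInv p) = p := by
  refine Function.invFun_eq ?_
  have hrange := (isPreconnected_range continuous_Phi).ordConnected
  obtain ⟨a, ha⟩ := ((Phi_eq_cdf ▸ tendsto_cdf_atBot _).eventually (eventually_lt_nhds h0)).exists
  obtain ⟨b, hb⟩ := ((Phi_eq_cdf ▸ tendsto_cdf_atTop _).eventually (eventually_gt_nhds h1)).exists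
  exact hrange.out (Set.mem_range_self a) (Set.mem_range_self b) ⟨ha.le, hb.le⟩

lemma Phi_truncQuantile (η : ℝ) {p : ℝ} (h0 : 0 < p) (h1 : p ≤ 1) :
    Phi (truncQuantile η p) = p * Phi η :=
  Phi_PhiInv (mul_pos h0 (Phi_pos η)) ((mul_le_of_le_one_left (Phi_pos η).le h1).trans_lt
    (Phi_lt_one η))

lemma isEmbedding_Phi : IsEmbedding Phi :=
  strictMono_Phi.isEmbedding_of_ordConnected (isPreconnected_range continuous_Phi).ordConnected

lemma tendsto_truncQuantile {α : Type*} {l : Filter α} {p : α → ℝ} (η : ℝ)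
    (hp : Tendsto p l (𝓝 1)) (hp01 : ∀ᶠ a in l, 0 < p a ∧ p a ≤ 1) :
    Tendsto (fun a => truncQuantile η (p a)) l (𝓝 η) := by
  rw [isEmbedding_Phi.tendsto_nhds_iff]
  have h := hp.mul_const (Phi η)
  rw [one_mul] at h
  refine h.congr' ?_
  filter_upwards [hp01] with a ha
  exact (Phi_truncQuantile η ha.1 ha.2).symm

theorem stmt9_general (ρ η : ℝ) (hρ : 0 < ρ) (x : ℝ) :
    Filter.Tendsto (fun n : ℕ =>
      (Phi (ρ * ((ρ * η - truncQuantile (ρ * η) (1 - 1 / n)) / ρ * x + η))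
        / Phi (ρ * η)) ^ n)
      Filter.atTop (nhds (Real.exp x)) := by
  have hp : Tendsto (fun n : ℕ => 1 - 1 / (n : ℝ)) atTop (𝓝 1) := by
    simpa using tendsto_const_nhds.sub (tendsto_one_div_atTop_nhds_zero_nat (𝕜 := ℝ))
  have hp01 : ∀ᶠ n : ℕ in atTop, 0 < 1 - 1 / (n : ℝ) ∧ 1 - 1 / (n : ℝ) ≤ 1 := by
    filter_upwards [eventually_ge_atTop 2] with n hn
    have h2 : (2 : ℝ) ≤ n := by exact_mod_cast hn
    exact ⟨by rw [sub_pos, div_lt_one (by positivity)]; linarith,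
      sub_le_self _ (by positivity)⟩
  have hlim := tendsto_div_pow_exp_of_differentiableAt (hasDerivAt_Phi (ρ * η)).differentiableAt
    ((hasDerivAt_Phi _).deriv ▸ (stdphi_pos _).ne') (Phi_pos _).ne'
    (tendsto_truncQuantile (ρ * η) hp hp01)
    (hp01.mono fun n hn => Phi_truncQuantile _ hn.1 hn.2) x
  refine hlim.congr fun n => ?_
  congr 3
  field_simp

/-- Reverse Weibull limit for the maximum of the correlated truncated Gaussian model:
with a_n = (ρη - Φ_{ρη}^{-1}(1-1/n))/ρ and centering at η,
F_η(a_n x + η) = [Φ(ρ(a_n x + η))/Φ(ρη)]^n → exp(x) for x ≤ 0. -/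
theorem stmt9 (ρ η : ℝ) (hρ : 0 < ρ) (x : ℝ) (hx : x ≤ 0) :
    Filter.Tendsto (fun n : ℕ =>
      (Phi (ρ * ((ρ * η - truncQuantile (ρ * η) (1 - 1 / n)) / ρ * x + η))
        / Phi (ρ * η)) ^ n)
      Filter.atTop (nhds (Real.exp x)) :=
  stmt9_general ρ η hρ x
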